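/- Let M ≥ 1 be an integer, set N = 2M−1 and ξ = cos(π/(2M)) = cos(π/(N+1)). Then for every integer n with 0 ≤ n ≤ N−1, (sin²(π/(2M))/(Mπ)) · ∫_{−1}^{1} (T_M(x)/(x−ξ))² T_n(x) (1−x²)^{−1/2} dx = ((N−n+1)/(N+1)) cos(πn/(N+1)) + (1/(N+1)) cot(π/(N+1)) sin(πn/(N+1)). -/

import Mathlib

open Real

/-- Chebyshev polynomials of the first kind. -/
noncomputable def chebT : ℕ → ℝ → ℝ
  | 0 => fun _ => 1
  | 1 => fun x => x
  | n + 2 => fun x => 2 * x * chebT (n + 1) x - chebT n x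

/-- Chebyshev polynomials of the second kind. -/
noncomputable def chebU : ℕ → ℝ → ℝ
  | 0 => fun _ => 1
  | 1 => fun x => 2 * x
  | n + 2 => fun x => 2 * x * chebU (n + 1) x - chebU n x

/-- Chebyshev polynomials of the third kind. -/
noncomputable def chebV : ℕ → ℝ → ℝ
  | 0 => fun _ => 1
  | 1 => fun x => 2 * x - 1
  | n + 2 => fun x => 2 * x * chebV (n + 1) x - chebV n x

/-- Chebyshev polynomials of the fourth kind. -/
noncomputable def chebW : ℕ → ℝ → ℝ
  | 0 => fun _ => 1
  | 1 => fun x => 2 * x + 1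
  | n + 2 => fun x => 2 * x * chebW (n + 1) x - chebW n x

/-!
Substituting `x = cos θ` turns the integral into `∫₀^π (cos Mθ / (cos θ - cos θ₀))² cos nθ dθ`
with `θ₀ = π / (2M)`. Because `sin (k θ₀)` vanishes at `k = 0` and `k = 2M`, telescoping a discrete
Wronskian gives `2 (cos θ - cos θ₀) ∑_{k<2M} sin (k θ₀) e^{ikθ} = 2 sin θ₀ cos (Mθ) e^{iMθ}`, so the
squared quotient is `|∑_{k<2M} sin (k θ₀) e^{ikθ}|² / sin² θ₀`. Orthogonality of the cosines on
`[0, π]` reduces the integral to the autocorrelation `π ∑_k sin ((k + n) θ₀) sin (k θ₀)`, which is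
summed in closed form by telescoping once more.
-/

theorem chebT_cos (θ : ℝ) : ∀ n : ℕ, chebT n (cos θ) = cos (n * θ)
  | 0 => by simp [chebT]
  | 1 => by simp [chebT]
  | n + 2 => by
    simp only [chebT, chebT_cos θ (n + 1), chebT_cos θ n]
    push_cast
    rw [show (n + 2 : ℝ) * θ = (n + 1) * θ + θ by ring,
      show (n : ℝ) * θ = (n + 1) * θ - θ by ring, cos_add, cos_sub]
    ring

theorem sin_nat_mul_add_two (x : ℝ) (k : ℕ) :
    sin ((k + 2 : ℕ) * x) + sin (k * x) = 2 * cos x * sin ((k + 1 : ℕ) * x) := by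
  push_cast
  rw [show (k + 2 : ℝ) * x = (k + 1) * x + x by ring,
    show (k : ℝ) * x = (k + 1) * x - x by ring, sin_add, sin_sub]
  ring

theorem cos_nat_mul_add_two (x : ℝ) (k : ℕ) :
    cos ((k + 2 : ℕ) * x) + cos (k * x) = 2 * cos x * cos ((k + 1 : ℕ) * x) := by
  push_cast
  rw [show (k + 2 : ℝ) * x = (k + 1) * x + x by ring,
    show (k : ℝ) * x = (k + 1) * x - x by ring, cos_add, cos_sub]
  ring

/-- The discrete Wronskian `s k * c (k + 1) - s (k + 1) * c k` telescopes. -/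
theorem mul_sum_range_mul_of_recurrence {R : Type*} [CommRing R] {s c : ℕ → R} {a b : R}
    (hs : ∀ k, s (k + 2) + s k = a * s (k + 1)) (hc : ∀ k, c (k + 2) + c k = b * c (k + 1))
    (N : ℕ) :
    (b - a) * ∑ k ∈ Finset.range N, s (k + 1) * c (k + 1) =
      (s N * c (N + 1) - s (N + 1) * c N) - (s 0 * c 1 - s 1 * c 0) := by
  rw [Finset.mul_sum, ← Finset.sum_range_sub (fun k => s k * c (k + 1) - s (k + 1) * c k)]
  refine Finset.sum_congr rfl fun k _ => ?_
  rw [show k + 1 + 1 = k + 2 from rfl]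
  linear_combination c (k + 1) * hs k - s (k + 1) * hc k

theorem ne_zero_of_two_mul_mul_eq_pi {M : ℕ} {θ₀ : ℝ} (hθ₀ : 2 * M * θ₀ = π) : M ≠ 0 := by
  rintro rfl
  simp [pi_ne_zero.symm] at hθ₀

theorem pos_and_lt_pi_of_two_mul_mul_eq_pi {M : ℕ} {θ₀ : ℝ} (hθ₀ : 2 * M * θ₀ = π) :
    0 < θ₀ ∧ θ₀ < π := by
  have hM : (1 : ℝ) ≤ M := by
    exact_mod_cast Nat.one_le_iff_ne_zero.mpr (ne_zero_of_two_mul_mul_eq_pi hθ₀)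
  constructor <;> nlinarith [pi_pos]

theorem sin_sq_mul_sq_cos_mul_div_sub_cos {M : ℕ} {θ₀ θ : ℝ} (hθ₀ : 2 * M * θ₀ = π)
    (hθ : cos θ ≠ cos θ₀) :
    sin θ₀ ^ 2 * (cos (M * θ) / (cos θ - cos θ₀)) ^ 2 =
      (∑ k ∈ Finset.range (2 * M), sin (k * θ₀) * cos (k * θ)) ^ 2 +
        (∑ k ∈ Finset.range (2 * M), sin (k * θ₀) * sin (k * θ)) ^ 2 := by
  obtain ⟨N, hN⟩ : ∃ N, 2 * M = N + 1 :=
    ⟨2 * M - 1, by have := ne_zero_of_two_mul_mul_eq_pi hθ₀; omega⟩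
  have hNθ₀ : (N : ℝ) * θ₀ = π - θ₀ := by
    have : (2 * M : ℝ) = N + 1 := by exact_mod_cast hN
    linear_combination hθ₀ - θ₀ * this
  have hwronskian_sum (c : ℕ → ℝ) (hc : ∀ k, c (k + 2) + c k = 2 * cos θ * c (k + 1)) :
      2 * (cos θ - cos θ₀) * ∑ k ∈ Finset.range (2 * M), sin (k * θ₀) * c k =
        sin θ₀ * (c (2 * M) + c 0) := by
    have h := mul_sum_range_mul_of_recurrence (s := fun k => sin (k * θ₀))
      (sin_nat_mul_add_two θ₀) hc N
    rw [hN, Finset.sum_range_succ']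
    push_cast at h ⊢
    rw [hNθ₀, show ((N : ℝ) + 1) * θ₀ = π by linarith, sin_pi_sub, sin_pi] at h
    simp only [zero_mul, one_mul, sin_zero] at h ⊢
    linear_combination h
  have hC := hwronskian_sum (fun k => cos (k * θ)) (cos_nat_mul_add_two θ)
  have hS := hwronskian_sum (fun k => sin (k * θ)) (sin_nat_mul_add_two θ)
  simp only [Nat.cast_mul, Nat.cast_ofNat, Nat.cast_zero, zero_mul, cos_zero, sin_zero,
    mul_assoc] at hC hS
  rw [cos_two_mul] at hC
  rw [sin_two_mul] at hS
  set C := ∑ k ∈ Finset.range (2 * M), sin (k * θ₀) * cos (k * θ)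
  set S := ∑ k ∈ Finset.range (2 * M), sin (k * θ₀) * sin (k * θ)
  set d := cos θ - cos θ₀
  have hd : d ≠ 0 := sub_ne_zero.mpr hθ
  rw [div_pow, mul_div_assoc', div_eq_iff (pow_ne_zero 2 hd)]
  linear_combination -(d * C + sin θ₀ * cos (M * θ) ^ 2) / 2 * hC -
    (d * S + sin θ₀ * sin (M * θ) * cos (M * θ)) / 2 * hS -
    sin θ₀ ^ 2 * cos (M * θ) ^ 2 * sin_sq_add_cos_sq (M * θ)

theorem integral_mul_one_sub_sq_rpow_neg_half (g : ℝ → ℝ) :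
    ∫ x in (-1 : ℝ)..1, g x * (1 - x ^ 2) ^ (-(1 / 2) : ℝ) = ∫ θ in (0 : ℝ)..π, g (cos θ) := by
  have hweight : ∀ θ ∈ Set.Ioo 0 π,
      |-sin θ| • (g (cos θ) * (1 - cos θ ^ 2) ^ (-(1 / 2) : ℝ)) = g (cos θ) := by
    intro θ hθ
    have hsin := sin_pos_of_pos_of_lt_pi hθ.1 hθ.2
    rw [← sin_sq, rpow_neg (sq_nonneg _), ← sqrt_eq_rpow, sqrt_sq hsin.le, abs_neg,
      abs_of_pos hsin, smul_eq_mul]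
    field_simp
  rw [intervalIntegral.integral_of_le (by norm_num), intervalIntegral.integral_of_le pi_pos.le,
    ← MeasureTheory.integral_Icc_eq_integral_Ioc, ← bijOn_cos.image_eq,
    MeasureTheory.integral_image_eq_integral_abs_deriv_smul measurableSet_Icc
      (fun θ _ => (hasDerivAt_cos θ).hasDerivWithinAt) injOn_cos,
    MeasureTheory.integral_Icc_eq_integral_Ioo, MeasureTheory.integral_Ioc_eq_integral_Ioo]
  exact MeasureTheory.setIntegral_congr_fun measurableSet_Ioo hweight

theorem integral_cos_int_mul (m : ℤ) :
    ∫ θ in (0 : ℝ)..π, cos (m * θ) = if m = 0 then π else 0 := by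
  split_ifs with hm
  · simp [hm]
  · have hm' : (m : ℝ) ≠ 0 := Int.cast_ne_zero.mpr hm
    simp [intervalIntegral.integral_comp_mul_left (fun θ => cos θ) hm', sin_int_mul_pi]

theorem integral_cos_int_mul_mul_cos_int_mul (p q : ℤ) :
    ∫ θ in (0 : ℝ)..π, cos (p * θ) * cos (q * θ) =
      π / 2 * ((if p = q then 1 else 0) + (if p = -q then 1 else 0)) := by
  have h (θ : ℝ) : cos (p * θ) * cos (q * θ) =
      (cos (((p - q : ℤ) : ℝ) * θ) + cos (((p + q : ℤ) : ℝ) * θ)) / 2 := by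
    push_cast
    rw [sub_mul, add_mul, cos_sub, cos_add]
    ring
  simp_rw [h]
  rw [intervalIntegral.integral_div,
    intervalIntegral.integral_add (Continuous.intervalIntegrable (by fun_prop) _ _)
      (Continuous.intervalIntegrable (by fun_prop) _ _),
    integral_cos_int_mul, integral_cos_int_mul]
  simp only [sub_eq_zero, add_eq_zero_iff_eq_neg]
  split_ifs <;> ring

theorem sq_sum_cos_add_sq_sum_sin (f : ℕ → ℝ) (N : ℕ) (θ : ℝ) :
    (∑ k ∈ Finset.range N, f k * cos (k * θ)) ^ 2 + (∑ k ∈ Finset.range N, f k * sin (k * θ)) ^ 2 =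
      ∑ j ∈ Finset.range N, ∑ k ∈ Finset.range N, f j * f k * cos (((j - k : ℤ) : ℝ) * θ) := by
  simp_rw [sq, Finset.sum_mul_sum, ← Finset.sum_add_distrib]
  refine Finset.sum_congr rfl fun j _ => Finset.sum_congr rfl fun k _ => ?_
  push_cast
  rw [sub_mul, cos_sub]
  ring

theorem sum_range_sum_range_ite_eq_add (f : ℕ → ℝ) (N n : ℕ) :
    ∑ j ∈ Finset.range N, ∑ k ∈ Finset.range N, (if j = k + n then f j * f k else 0) =
      ∑ k ∈ Finset.range (N - n), f (k + n) * f k := by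
  rw [Finset.sum_comm]
  simp_rw [Finset.sum_ite_eq', Finset.mem_range]
  rw [← Finset.sum_filter]
  congr 1
  ext k
  simp only [Finset.mem_filter, Finset.mem_range]
  omega

theorem integral_sq_sum_cos_add_sq_sum_sin_mul_cos (f : ℕ → ℝ) (N n : ℕ) :
    ∫ θ in (0 : ℝ)..π, ((∑ k ∈ Finset.range N, f k * cos (k * θ)) ^ 2 +
        (∑ k ∈ Finset.range N, f k * sin (k * θ)) ^ 2) * cos (n * θ) =
      π * ∑ k ∈ Finset.range (N - n), f (k + n) * f k := by
  set X : ℕ → ℕ → ℝ := fun j k => if j = k + n then f j * f k else 0 with hX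
  have hterm (j k : ℕ) :
      ∫ θ in (0 : ℝ)..π, f j * f k * cos (((j - k : ℤ) : ℝ) * θ) * cos (n * θ) =
        π / 2 * (X j k + X k j) := by
    simp_rw [mul_assoc (f j * f k), intervalIntegral.integral_const_mul]
    have := integral_cos_int_mul_mul_cos_int_mul (j - k) n
    rw [Int.cast_natCast] at this
    rw [this]
    simp only [hX, show (j : ℤ) - k = n ↔ j = k + n by omega,
      show (j : ℤ) - k = -n ↔ k = j + n by omega]
    split_ifs <;> ring
  calc _ = ∑ j ∈ Finset.range N, ∑ k ∈ Finset.range N, π / 2 * (X j k + X k j) := by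
        simp_rw [sq_sum_cos_add_sq_sum_sin, Finset.sum_mul, ← hterm]
        rw [intervalIntegral.integral_finsetSum fun j _ => ?_]
        · refine Finset.sum_congr rfl fun j _ => ?_
          exact intervalIntegral.integral_finsetSum fun k _ =>
            Continuous.intervalIntegrable (by fun_prop) _ _
        · exact Continuous.intervalIntegrable (by fun_prop) _ _
    _ = π / 2 * (∑ j ∈ Finset.range N, ∑ k ∈ Finset.range N, X j k +
          ∑ j ∈ Finset.range N, ∑ k ∈ Finset.range N, X k j) := by
        simp only [Finset.mul_sum, Finset.sum_add_distrib, mul_add]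
    _ = _ := by
        rw [Finset.sum_comm (f := fun j k => X k j), sum_range_sum_range_ite_eq_add]
        ring

theorem two_mul_sin_mul_sum_range_cos (a x : ℝ) (K : ℕ) :
    2 * sin x * ∑ k ∈ Finset.range K, cos (a + 2 * k * x) =
      sin (a + (2 * K - 1) * x) - sin (a - x) := by
  induction K with
  | zero => simp [sub_eq_add_neg]
  | succ K ih =>
    rw [Finset.sum_range_succ, mul_add, ih]
    push_cast
    rw [show a + (2 * (K + 1 : ℝ) - 1) * x = a + 2 * K * x + x by ring,
      show a + (2 * K - 1) * x = a + 2 * K * x - x by ring, sin_add, sin_sub]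
    ring

theorem two_mul_sum_range_sin_mul_sin {K n : ℕ} {x : ℝ} (hx : (K + n) * x = π)
    (hsin : sin x ≠ 0) :
    2 * ∑ k ∈ Finset.range K, sin ((k + n : ℕ) * x) * sin (k * x) =
      K * cos (n * x) + cot x * sin (n * x) := by
  have hprod (k : ℕ) : 2 * (sin ((k + n : ℕ) * x) * sin (k * x)) =
      cos (n * x) - cos (n * x + 2 * k * x) := by
    rw [← mul_assoc, two_mul_sin_mul_sin]
    push_cast
    ring_nf
  have hcos : 2 * sin x * ∑ k ∈ Finset.range K, cos (n * x + 2 * k * x) =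
      -(2 * sin (n * x) * cos x) := by
    rw [two_mul_sin_mul_sum_range_cos,
      show n * x + (2 * K - 1) * x = 2 * π - (n * x + x) by linear_combination 2 * hx,
      sin_two_pi_sub, sin_add, sin_sub]
    ring
  rw [Finset.mul_sum, Finset.sum_congr rfl fun k _ => hprod k, Finset.sum_sub_distrib,
    Finset.sum_const, Finset.card_range, nsmul_eq_mul, cot_eq_cos_div_sin]
  set S := ∑ k ∈ Finset.range K, cos (n * x + 2 * k * x)
  field_simp
  linear_combination -hcos / 2

theorem integral_sq_cos_mul_div_sub_cos_mul_cos {M : ℕ} {θ₀ : ℝ} (hθ₀ : 2 * M * θ₀ = π)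
    (n : ℕ) :
    ∫ θ in (0 : ℝ)..π, (cos (M * θ) / (cos θ - cos θ₀)) ^ 2 * cos (n * θ) =
      π / sin θ₀ ^ 2 * ∑ k ∈ Finset.range (2 * M - n), sin ((k + n : ℕ) * θ₀) * sin (k * θ₀) := by
  obtain ⟨hθ₀_pos, hθ₀_lt⟩ := pos_and_lt_pi_of_two_mul_mul_eq_pi hθ₀
  have hsin : sin θ₀ ≠ 0 := (sin_pos_of_pos_of_lt_pi hθ₀_pos hθ₀_lt).ne'
  have hae : ∀ᵐ θ, θ ∈ Set.uIoc 0 π →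
      (cos (M * θ) / (cos θ - cos θ₀)) ^ 2 * cos (n * θ) =
        (sin θ₀ ^ 2)⁻¹ * (((∑ k ∈ Finset.range (2 * M), sin (k * θ₀) * cos (k * θ)) ^ 2 +
          (∑ k ∈ Finset.range (2 * M), sin (k * θ₀) * sin (k * θ)) ^ 2) * cos (n * θ)) := by
    filter_upwards [MeasureTheory.compl_mem_ae_iff.mpr (MeasureTheory.measure_singleton θ₀)]
      with θ hne hθ
    rw [Set.uIoc_of_le pi_pos.le] at hθ
    have hcos : cos θ ≠ cos θ₀ := fun h =>
      hne (injOn_cos ⟨hθ.1.le, hθ.2⟩ ⟨hθ₀_pos.le, hθ₀_lt.le⟩ h)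
    rw [← sin_sq_mul_sq_cos_mul_div_sub_cos hθ₀ hcos]
    field_simp
  rw [intervalIntegral.integral_congr_ae hae, intervalIntegral.integral_const_mul,
    integral_sq_sum_cos_add_sq_sum_sin_mul_cos]
  ring

/-- The Jackson damping factors: the optimal damping factors for `α = β = -1/2`
(Chebyshev polynomials of the first kind) in explicit trigonometric form.
Here `N = 2M - 1` and `ξ = cos(π/(2M)) = cos(π/(N+1))`. -/
theorem jackson_damping_factors (M : ℕ) (hM : 1 ≤ M) (n : ℕ) (hn : n ≤ 2 * M - 1 - 1) :
    Real.sin (π / (2 * M)) ^ 2 / (M * π) *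
        ∫ x in (-1:ℝ)..1,
          (chebT M x / (x - Real.cos (π / (2 * M)))) ^ 2 * chebT n x *
            (1 - x ^ 2) ^ (-(1/2) : ℝ) =
      ((2 * (M : ℝ) - 1) - n + 1) / ((2 * (M : ℝ) - 1) + 1) *
          Real.cos (π * n / ((2 * (M : ℝ) - 1) + 1)) +
        Real.cot (π / ((2 * (M : ℝ) - 1) + 1)) / ((2 * (M : ℝ) - 1) + 1) *
          Real.sin (π * n / ((2 * (M : ℝ) - 1) + 1)) := by
  set θ₀ := π / (2 * M) with hθ₀_def
  have hθ₀ : 2 * M * θ₀ = π := by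
    have : (M : ℝ) ≠ 0 := by positivity
    rw [hθ₀_def]
    field_simp
  have hK : ((2 * M - n : ℕ) + n : ℝ) * θ₀ = π := by
    rw [Nat.cast_sub (by omega)]
    push_cast
    linear_combination hθ₀
  obtain ⟨hθ₀_pos, hθ₀_lt⟩ := pos_and_lt_pi_of_two_mul_mul_eq_pi hθ₀
  have hsin : sin θ₀ ≠ 0 := (sin_pos_of_pos_of_lt_pi hθ₀_pos hθ₀_lt).ne'
  have hsum := two_mul_sum_range_sin_mul_sin hK hsin
  rw [integral_mul_one_sub_sq_rpow_neg_half]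
  simp_rw [chebT_cos]
  rw [integral_sq_cos_mul_div_sub_cos_mul_cos hθ₀, show (2 * (M : ℝ) - 1) + 1 = 2 * M by ring,
    ← hθ₀_def, show π * n / (2 * M) = n * θ₀ by rw [hθ₀_def]; ring]
  set T := ∑ k ∈ Finset.range (2 * M - n), sin ((k + n : ℕ) * θ₀) * sin (k * θ₀)
  rw [Nat.cast_sub (by omega)] at hsum
  push_cast at hsum
  field_simp
  linear_combination hsum
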